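/- arXiv:2101.04024 — 2 statements merged into one kernel-verified Lean document; each statement's English description precedes it below -/
import Mathlib

section
/- For any real number epsilon > 0 and any natural number g, the sum over all n in Z^g of the product over i = 1..g of exp(-pi * epsilon * (n_i + b_i)^2) is at most (2 / (1 - exp(-pi * epsilon)))^g, for any real vector b in [0,1)^g. -/
/-! Each factor is a one-dimensional shifted Gaussian sum. Since `b ∈ [0, 1)`, the `k`-th term on
either side of the shift satisfies `(n + b)² ≥ k² ≥ k`, so it is dominated by `exp (-π ε) ^ k`, and
the two geometric tails give `2 / (1 - exp (-π ε))`. The `g`-dimensional sum of products is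
controlled by the product of the one-dimensional sums, already on finite partial sums. -/

open Real Finset

lemma exp_neg_mul_sq_le_pow {c x : ℝ} (hc : 0 ≤ c) {k : ℕ} (hk : (k : ℝ) ≤ |x|) :
    exp (-c * x ^ 2) ≤ exp (-c) ^ k := by
  have hk_sq : (k : ℝ) ≤ x ^ 2 :=
    calc (k : ℝ) ≤ (k : ℝ) ^ 2 := by exact_mod_cast Nat.le_self_pow two_ne_zero k
      _ ≤ |x| ^ 2 := by gcongr
      _ = x ^ 2 := sq_abs x
  rw [← exp_nat_mul, exp_le_exp]
  nlinarith

lemma summable_and_tsum_le_of_le_geometric {f : ℤ → ℝ} {r : ℝ} (hf : 0 ≤ f) (hr₀ : 0 ≤ r)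
    (hr₁ : r < 1) (h_nat : ∀ k : ℕ, f k ≤ r ^ k) (h_neg : ∀ k : ℕ, f (-(k + 1)) ≤ r ^ k) :
    Summable f ∧ ∑' n, f n ≤ 2 / (1 - r) := by
  have hgeom := summable_geometric_of_lt_one hr₀ hr₁
  have hs_nat : Summable fun k : ℕ => f k := hgeom.of_nonneg_of_le (fun _ => hf _) h_nat
  have hs_neg : Summable fun k : ℕ => f (-(k + 1)) := hgeom.of_nonneg_of_le (fun _ => hf _) h_neg
  refine ⟨.of_nat_of_neg_add_one hs_nat hs_neg, ?_⟩
  calc ∑' n, f n = ∑' k : ℕ, f k + ∑' k : ℕ, f (-(k + 1)) :=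
        tsum_of_nat_of_neg_add_one hs_nat hs_neg
    _ ≤ ∑' k : ℕ, r ^ k + ∑' k : ℕ, r ^ k :=
        add_le_add (hs_nat.tsum_le_tsum h_nat hgeom) (hs_neg.tsum_le_tsum h_neg hgeom)
    _ = 2 / (1 - r) := by rw [tsum_geometric_of_lt_one hr₀ hr₁]; ring

lemma summable_and_tsum_exp_neg_mul_add_sq_le {c b : ℝ} (hc : 0 < c) (hb : b ∈ Set.Ico (0 : ℝ) 1) :
    Summable (fun n : ℤ => exp (-c * (n + b) ^ 2)) ∧
      ∑' n : ℤ, exp (-c * (n + b) ^ 2) ≤ 2 / (1 - exp (-c)) := by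
  refine summable_and_tsum_le_of_le_geometric (fun _ => (exp_pos _).le) (exp_pos _).le
    (exp_lt_one_iff.2 (neg_neg_of_pos hc)) (fun k => ?_) (fun k => ?_)
  · refine exp_neg_mul_sq_le_pow hc.le (le_abs.2 (Or.inl ?_))
    push_cast
    linarith [hb.1]
  · refine exp_neg_mul_sq_le_pow hc.le (le_abs.2 (Or.inr ?_))
    push_cast
    linarith [hb.2]

lemma tsum_prod_le_prod_of_sum_le {ι κ : Type*} [Fintype ι] {f : ι → κ → ℝ} {C : ι → ℝ}
    (hf : ∀ i, 0 ≤ f i) (hC : ∀ i (u : Finset κ), ∑ m ∈ u, f i m ≤ C i) :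
    ∑' n : ι → κ, ∏ i, f i (n i) ≤ ∏ i, C i := by
  classical
  refine Real.tsum_le_of_sum_le (fun n => prod_nonneg fun i _ => hf i (n i)) fun s => ?_
  have hs : s ⊆ Fintype.piFinset fun i => s.image (· i) := fun n hn =>
    Fintype.mem_piFinset.2 fun i => mem_image_of_mem _ hn
  calc ∑ n ∈ s, ∏ i, f i (n i)
      ≤ ∑ n ∈ Fintype.piFinset (fun i => s.image (· i)), ∏ i, f i (n i) :=
        sum_le_sum_of_subset_of_nonneg hs fun n _ _ => prod_nonneg fun i _ => hf i (n i)
    _ = ∏ i, ∑ m ∈ s.image (· i), f i m := (prod_univ_sum _ _).symm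
    _ ≤ ∏ i, C i :=
        prod_le_prod (fun i _ => sum_nonneg fun m _ => hf i m) fun i _ => hC i _

theorem theta_tail_sum_bound (g : ℕ) (ε : ℝ) (hε : 0 < ε) (b : Fin g → ℝ)
    (hb : ∀ i, b i ∈ Set.Ico (0 : ℝ) 1) :
    (∑' n : Fin g → ℤ, ∏ i, Real.exp (-π * ε * ((n i : ℝ) + b i) ^ 2))
      ≤ (2 / (1 - Real.exp (-π * ε))) ^ g := by
  have hπε : 0 < π * ε := mul_pos pi_pos hε
  have h_factor (i : Fin g) (u : Finset ℤ) :
      ∑ m ∈ u, exp (-π * ε * ((m : ℝ) + b i) ^ 2) ≤ 2 / (1 - exp (-π * ε)) := by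
    obtain ⟨hsum, hle⟩ := summable_and_tsum_exp_neg_mul_add_sq_le hπε (hb i)
    simp only [neg_mul] at hsum hle ⊢
    exact (hsum.sum_le_tsum u fun _ _ => (exp_pos _).le).trans hle
  calc _ ≤ ∏ _i : Fin g, 2 / (1 - exp (-π * ε)) :=
        tsum_prod_le_prod_of_sum_le (fun _ _ => (exp_pos _).le) h_factor
    _ = _ := by rw [prod_const, card_univ, Fintype.card_fin]
end

section
/- Let S_1: Delta -> H_{g_1}, and let S_2, S_3 be maps on Delta, where S_1, S_2, S_3 are continuous on the closed disc with Im S_1(0) positive definite; let B in R^{g_2 x g_2} be symmetric positive definite, and let T(t) be the block matrix with blocks Im S_1(t), Im S_3(t), transpose(Im S_3(t)), and (-(log|t|)/(2 pi)) B + Im S_2(t). Then det(T(t)) / (-log|t|)^{g_2} converges to (1/(2 pi))^{g_2} * det(Im S_1(0)) * det(B) > 0 as t -> 0; in particular log det T(t) - g_2 * log(-log|t|) extends continuously to t = 0. -/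
open Matrix Filter Real Topology

/-- Degeneration of the determinant of the imaginary part of the period matrix:
with `T t = fromBlocks (A₁ t) (A₃ t) (A₃ t)ᵀ ((-(log |t|)/(2π)) • B + A₂ t)`,
where `A₁ = Im S₁`, `A₂ = Im S₂`, `A₃ = Im S₃` are continuous on the closed unit
disc with `A₁ 0` positive definite and `B` positive definite, one has
`det (T t) / (-log |t|)^{g₂} → (1/(2π))^{g₂} det (A₁ 0) det B > 0` as `t → 0`,
and `log det (T t) - g₂ log(-log |t|)` extends continuously to `t = 0`. -/
theorem det_period_matrix_degeneration (g₁ g₂ : ℕ)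
    (A₁ : ℂ → Matrix (Fin g₁) (Fin g₁) ℝ)
    (A₂ : ℂ → Matrix (Fin g₂) (Fin g₂) ℝ)
    (A₃ : ℂ → Matrix (Fin g₁) (Fin g₂) ℝ)
    (hA₁ : ContinuousOn A₁ (Metric.closedBall 0 1))
    (hA₂ : ContinuousOn A₂ (Metric.closedBall 0 1))
    (hA₃ : ContinuousOn A₃ (Metric.closedBall 0 1))
    (hA₁0 : (A₁ 0).PosDef)
    (B : Matrix (Fin g₂) (Fin g₂) ℝ) (hB : B.PosDef)
    (T : ℂ → Matrix (Fin g₁ ⊕ Fin g₂) (Fin g₁ ⊕ Fin g₂) ℝ)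
    (hT : ∀ t, T t = Matrix.fromBlocks (A₁ t) (A₃ t) (A₃ t)ᵀ
        (((-Real.log ‖t‖) / (2 * π)) • B + A₂ t)) :
    Tendsto (fun t : ℂ => (T t).det / (-Real.log ‖t‖) ^ g₂) (𝓝[≠] 0)
        (𝓝 ((1 / (2 * π)) ^ g₂ * (A₁ 0).det * B.det)) ∧
    0 < (1 / (2 * π)) ^ g₂ * (A₁ 0).det * B.det ∧
    ∃ L : ℝ, Tendsto
      (fun t : ℂ => Real.log (T t).det - (g₂ : ℝ) * Real.log (-Real.log ‖t‖))
      (𝓝[≠] 0) (𝓝 L) := by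
  have hπ : (0:ℝ) < 2 * π := by positivity
  have hA1d : 0 < (A₁ 0).det := hA₁0.det_pos
  have hBd : 0 < B.det := hB.det_pos
  have hcpos : 0 < (1 / (2 * π)) ^ g₂ * (A₁ 0).det * B.det := by positivity
  -- the auxiliary continuous function
  set F : (Matrix (Fin g₁) (Fin g₁) ℝ × Matrix (Fin g₂) (Fin g₂) ℝ ×
      Matrix (Fin g₁) (Fin g₂) ℝ × ℝ) → ℝ :=
    fun q => (Matrix.fromBlocks q.1 (q.2.2.2 • q.2.2.1) (q.2.2.1)ᵀ
      (B + q.2.2.2 • q.2.1)).det with hFdef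
  have hF : Continuous F := by
    apply Continuous.matrix_det
    apply Continuous.matrix_fromBlocks
    · exact continuous_fst
    · exact (continuous_snd.snd.snd).smul (continuous_snd.snd.fst)
    · exact (continuous_snd.snd.fst).matrix_transpose
    · exact continuous_const.add ((continuous_snd.snd.snd).smul (continuous_snd.fst))
  -- the rescaling parameter
  set ε : ℂ → ℝ := fun t => (2 * π) / (-Real.log ‖t‖) with hεdef
  have hnormlim : Tendsto (fun t : ℂ => ‖t‖) (𝓝[≠] (0:ℂ)) (𝓝[>] 0) := by
    rw [tendsto_nhdsWithin_iff]
    constructor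
    · exact tendsto_norm_zero.mono_left nhdsWithin_le_nhds
    · filter_upwards [eventually_mem_nhdsWithin] with t ht
      exact norm_pos_iff.mpr ht
  have hloglim : Tendsto (fun t : ℂ => -Real.log ‖t‖) (𝓝[≠] (0:ℂ)) atTop :=
    tendsto_neg_atBot_atTop.comp (Real.tendsto_log_nhdsGT_zero.comp hnormlim)
  have hεlim : Tendsto ε (𝓝[≠] (0:ℂ)) (𝓝 0) :=
    Tendsto.div_atTop tendsto_const_nhds hloglim
  -- eventually ‖t‖ < 1 and t ≠ 0, hence -log ‖t‖ > 0
  have hev1 : ∀ᶠ t : ℂ in 𝓝[≠] 0, 0 < -Real.log ‖t‖ := by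
    have h1 : ∀ᶠ t : ℂ in 𝓝 0, ‖t‖ < 1 := by
      filter_upwards [Metric.ball_mem_nhds (0:ℂ) one_pos] with t ht
      simpa using mem_ball_zero_iff.mp ht
    filter_upwards [h1.filter_mono nhdsWithin_le_nhds, eventually_mem_nhdsWithin] with t h1 h2
    have h0 : 0 < ‖t‖ := norm_pos_iff.mpr h2
    simpa using Real.log_neg h0 h1
  -- the key eventual identity
  have hev : ∀ᶠ t : ℂ in 𝓝[≠] 0,
      (T t).det / (-Real.log ‖t‖) ^ g₂
        = (1 / (2 * π)) ^ g₂ * F (A₁ t, A₂ t, A₃ t, ε t) := by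
    filter_upwards [hev1] with t hL
    set L : ℝ := -Real.log ‖t‖ with hLdef
    have hLne : L ≠ 0 := ne_of_gt hL
    have hεval : ε t = 2 * π / L := rfl
    have hεL : ε t * (L / (2 * π)) = 1 := by
      rw [hεval]; field_simp
    have hmat : Matrix.fromBlocks (A₁ t) (ε t • A₃ t) (A₃ t)ᵀ (B + ε t • A₂ t)
        = T t * Matrix.fromBlocks (1 : Matrix (Fin g₁) (Fin g₁) ℝ) 0 0
            (ε t • (1 : Matrix (Fin g₂) (Fin g₂) ℝ)) := by
      rw [hT t, Matrix.fromBlocks_multiply]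
      simp only [Matrix.mul_one, Matrix.mul_zero, add_zero, zero_add, Matrix.mul_smul,
        smul_add, smul_smul, ← hLdef, hεL, one_smul]
    have hdetF : F (A₁ t, A₂ t, A₃ t, ε t) = (T t).det * (ε t) ^ g₂ := by
      have : F (A₁ t, A₂ t, A₃ t, ε t)
          = (Matrix.fromBlocks (A₁ t) (ε t • A₃ t) (A₃ t)ᵀ (B + ε t • A₂ t)).det := rfl
      rw [this, hmat, Matrix.det_mul]
      congr 1
      rw [Matrix.det_fromBlocks_zero₁₂, Matrix.det_smul]
      simp
    rw [hdetF, hεval]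
    have hπne : (2 * π) ≠ 0 := ne_of_gt hπ
    rw [div_pow, mul_pow, div_pow, one_pow]
    field_simp
    ring_nf
  -- the limit of the right-hand side
  have htuple : Tendsto (fun t : ℂ => (A₁ t, A₂ t, A₃ t, ε t)) (𝓝[≠] 0)
      (𝓝 (A₁ 0, A₂ 0, A₃ 0, 0)) := by
    have hmem : Metric.closedBall (0:ℂ) 1 ∈ 𝓝 (0:ℂ) := Metric.closedBall_mem_nhds 0 one_pos
    have h1 := (hA₁.continuousAt hmem).tendsto.mono_left (nhdsWithin_le_nhds (s := {(0:ℂ)}ᶜ))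
    have h2 := (hA₂.continuousAt hmem).tendsto.mono_left (nhdsWithin_le_nhds (s := {(0:ℂ)}ᶜ))
    have h3 := (hA₃.continuousAt hmem).tendsto.mono_left (nhdsWithin_le_nhds (s := {(0:ℂ)}ᶜ))
    have := h1.prodMk (h2.prodMk (h3.prodMk hεlim))
    simpa [nhds_prod_eq] using this
  have hF0 : F (A₁ 0, A₂ 0, A₃ 0, 0) = (A₁ 0).det * B.det := by
    have : F (A₁ 0, A₂ 0, A₃ 0, 0)
        = (Matrix.fromBlocks (A₁ 0) ((0:ℝ) • A₃ 0) (A₃ 0)ᵀ (B + (0:ℝ) • A₂ 0)).det := rfl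
    rw [this]
    simp [Matrix.det_fromBlocks_zero₁₂]
  have hmain : Tendsto (fun t : ℂ => (T t).det / (-Real.log ‖t‖) ^ g₂) (𝓝[≠] 0)
      (𝓝 ((1 / (2 * π)) ^ g₂ * (A₁ 0).det * B.det)) := by
    have h := (hF.continuousAt.tendsto.comp htuple).const_mul ((1 / (2 * π)) ^ g₂)
    rw [hF0] at h
    refine Tendsto.congr' (by filter_upwards [hev] with t ht; exact ht.symm) ?_
    convert h using 1
    · rfl
    ring_nf
  refine ⟨hmain, hcpos, ⟨Real.log ((1 / (2 * π)) ^ g₂ * (A₁ 0).det * B.det), ?_⟩⟩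
  have hlog : Tendsto (fun t : ℂ => Real.log ((T t).det / (-Real.log ‖t‖) ^ g₂)) (𝓝[≠] 0)
      (𝓝 (Real.log ((1 / (2 * π)) ^ g₂ * (A₁ 0).det * B.det))) :=
    ((Real.continuousAt_log (ne_of_gt hcpos)).tendsto).comp hmain
  refine Tendsto.congr' ?_ hlog
  have hevpos : ∀ᶠ t : ℂ in 𝓝[≠] 0, 0 < (T t).det / (-Real.log ‖t‖) ^ g₂ :=
    hmain.eventually (eventually_gt_nhds hcpos)
  filter_upwards [hev1, hevpos] with t hL hpos
  have hLpow : 0 < (-Real.log ‖t‖) ^ g₂ := pow_pos hL _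
  have hdetpos : 0 < (T t).det := by
    have := mul_pos hpos hLpow
    rwa [div_mul_cancel₀ _ (ne_of_gt hLpow)] at this
  rw [Real.log_div (ne_of_gt hdetpos) (ne_of_gt hLpow), Real.log_pow]
end
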